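/- Let g ≥ 1 be an integer, let A be an allocation of the items M = {1,…,m} among n agents, and for a profile u of monotone utility functions define scr^g_A(u) := −min{ t ∈ {1,…,g} : A is EF(2t) with respect to u^{−(g−t)} }, with scr^g_A(u) := −g if this set is empty. Then for every pair of (agent × item)-level adjacent profiles u, ũ of monotone utility functions, |scr^g_A(u) − scr^g_A(ũ)| ≤ 1. -/

import Mathlib

/-!
Let `u` and `v` agree on all bundles avoiding one item `j`. Removing `j` in addition to `k`
items turns `u` into `v`, so `u^{-(k+1)} ≤ v^{-k}` on the envious agent's own bundle; on the
envied bundle, removing `j` and the one extra item that `u^{-(k+1)}` discards brings `v^{-k}`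
below `u^{-(k+1)}`. Hence EF(2t) with respect to `u^{-(g-t)}` yields EF(2t+2) with respect to
`v^{-(g-t-1)}`, so the least feasible `t` grows by at most one from `u` to `v`, and symmetrically.
-/

def IsPartition {n m : ℕ} (A : Fin n → Finset (Fin m)) : Prop :=
  (∀ i j : Fin n, i ≠ j → Disjoint (A i) (A j)) ∧
    Finset.univ.biUnion A = (Finset.univ : Finset (Fin m))

def EF {n m : ℕ} (c : ℕ) (u : Fin n → Finset (Fin m) → ℝ)
    (A : Fin n → Finset (Fin m)) : Prop :=
  ∀ i i' : Fin n, ∃ S ⊆ A i', S.card ≤ c ∧ u i (A i) ≥ u i (A i' \ S)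

noncomputable def kRemoved {m : ℕ} (u : Finset (Fin m) → ℝ) (k : ℕ)
    (S : Finset (Fin m)) : ℝ :=
  ((Finset.univ : Finset (Fin m)).powerset.filter fun T => T.card ≤ k).inf'
    ⟨∅, by simp⟩ fun T => u (S \ T)

def MonotoneProfile {n m : ℕ} (u : Fin n → Finset (Fin m) → ℝ) : Prop :=
  ∀ i : Fin n, (∀ S : Finset (Fin m), 0 ≤ u i S) ∧
    ∀ S T : Finset (Fin m), S ⊆ T → u i S ≤ u i T

def ItemAdjFn {n m : ℕ} (u u' : Fin n → Finset (Fin m) → ℝ) : Prop :=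
  ∃ (iStar : Fin n) (jStar : Fin m),
    (∀ i : Fin n, i ≠ iStar → u i = u' i) ∧
    ∀ S : Finset (Fin m), jStar ∉ S → u iStar S = u' iStar S

/-- The scoring function `scr^g_A(u) = −min{t ∈ [g] : A is EF(2t) w.r.t. u^{−(g−t)}}`,
with value `−g` if the set is empty. -/
noncomputable def scr {n m : ℕ} (g : ℕ) (A : Fin n → Finset (Fin m))
    (u : Fin n → Finset (Fin m) → ℝ) : ℤ := by
  classical
  exact if ({t : ℕ | 1 ≤ t ∧ t ≤ g ∧
        EF (2 * t) (fun i => kRemoved (u i) (g - t)) A}).Nonempty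
    then -((sInf {t : ℕ | 1 ≤ t ∧ t ≤ g ∧
        EF (2 * t) (fun i => kRemoved (u i) (g - t)) A} : ℕ) : ℤ)
    else -(g : ℤ)

section kRemoved

variable {m : ℕ}

lemma kRemoved_le (u : Finset (Fin m) → ℝ) {k : ℕ} (S : Finset (Fin m)) {T : Finset (Fin m)}
    (hT : T.card ≤ k) : kRemoved u k S ≤ u (S \ T) :=
  Finset.inf'_le _ (by simp [hT])

lemma le_kRemoved (u : Finset (Fin m) → ℝ) (k : ℕ) (S : Finset (Fin m)) {c : ℝ}
    (h : ∀ T : Finset (Fin m), T.card ≤ k → c ≤ u (S \ T)) : c ≤ kRemoved u k S :=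
  Finset.le_inf' _ _ fun T hT => h T (Finset.mem_filter.mp hT).2

lemma exists_kRemoved_eq (u : Finset (Fin m) → ℝ) (k : ℕ) (S : Finset (Fin m)) :
    ∃ T : Finset (Fin m), T.card ≤ k ∧ kRemoved u k S = u (S \ T) := by
  obtain ⟨T, hT, h⟩ := Finset.exists_mem_eq_inf' (⟨∅, by simp⟩ :
    ((Finset.univ : Finset (Fin m)).powerset.filter fun T => T.card ≤ k).Nonempty)
    (fun T => u (S \ T))
  exact ⟨T, (Finset.mem_filter.mp hT).2, h⟩

variable {u v : Finset (Fin m) → ℝ} {j : Fin m}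

lemma kRemoved_succ_le_of_agree (hv : Monotone v) (hag : ∀ S, j ∉ S → u S = v S) (k : ℕ)
    (S : Finset (Fin m)) : kRemoved u (k + 1) S ≤ kRemoved v k S := by
  refine le_kRemoved _ _ _ fun T hT => ?_
  calc kRemoved u (k + 1) S ≤ u (S \ insert j T) :=
        kRemoved_le _ _ ((Finset.card_insert_le _ _).trans (by omega))
    _ = v (S \ insert j T) := hag _ (by simp)
    _ ≤ v (S \ T) := hv (Finset.sdiff_subset_sdiff le_rfl (Finset.subset_insert _ _))

lemma exists_kRemoved_sdiff_le_kRemoved_succ (hu : Monotone u) (hag : ∀ S, j ∉ S → u S = v S)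
    (k : ℕ) (S : Finset (Fin m)) :
    ∃ j' : Fin m, kRemoved v k (S \ {j, j'}) ≤ kRemoved u (k + 1) S := by
  obtain ⟨T, hT, heq⟩ := exists_kRemoved_eq u (k + 1) S
  obtain ⟨j', T', hT'⟩ : ∃ (j' : Fin m) (T' : Finset (Fin m)), T'.card ≤ k ∧ T ⊆ insert j' T' := by
    rcases T.eq_empty_or_nonempty with rfl | ⟨j', hj'⟩
    · exact ⟨j, ∅, by simp, by simp⟩
    · refine ⟨j', T.erase j', ?_, (Finset.insert_erase hj').symm.subset⟩
      rw [Finset.card_erase_of_mem hj']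
      omega
  refine ⟨j', ?_⟩
  calc kRemoved v k (S \ {j, j'}) ≤ v ((S \ {j, j'}) \ T') := kRemoved_le _ _ hT'.1
    _ = u ((S \ {j, j'}) \ T') := (hag _ (by simp)).symm
    _ ≤ u (S \ T) := hu fun x hx => by
        simp only [Finset.mem_sdiff, Finset.mem_insert, Finset.mem_singleton] at hx ⊢
        have := @hT'.2 x
        simp only [Finset.mem_insert] at this
        tauto
    _ = kRemoved u (k + 1) S := heq.symm

end kRemoved

lemma EF.add_two_of_agree {n m c k : ℕ} {A : Fin n → Finset (Fin m)}
    {u v : Fin n → Finset (Fin m) → ℝ} (hu : ∀ i, Monotone (u i)) (hv : ∀ i, Monotone (v i))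
    {j : Fin m} (hag : ∀ i S, j ∉ S → u i S = v i S)
    (hEF : EF c (fun i => kRemoved (u i) (k + 1)) A) :
    EF (c + 2) (fun i => kRemoved (v i) k) A := by
  intro i i'
  obtain ⟨S, -, hcard, henvy⟩ := hEF i i'
  obtain ⟨j', hj'⟩ :=
    exists_kRemoved_sdiff_le_kRemoved_succ (hu i) (hag i) k (A i' \ S)
  refine ⟨(S ∪ {j, j'}) ∩ A i', Finset.inter_subset_right, ?_, ?_⟩
  · calc ((S ∪ {j, j'}) ∩ A i').card ≤ (S ∪ {j, j'}).card :=
          Finset.card_le_card Finset.inter_subset_left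
      _ ≤ S.card + ({j, j'} : Finset (Fin m)).card := Finset.card_union_le _ _
      _ ≤ c + 2 := add_le_add hcard Finset.card_le_two
  · have hset : A i' \ ((S ∪ {j, j'}) ∩ A i') = (A i' \ S) \ {j, j'} := by
      ext x
      simp only [Finset.mem_sdiff, Finset.mem_inter, Finset.mem_union]
      tauto
    calc kRemoved (v i) k (A i' \ ((S ∪ {j, j'}) ∩ A i'))
        = kRemoved (v i) k ((A i' \ S) \ {j, j'}) := by rw [hset]
      _ ≤ kRemoved (u i) (k + 1) (A i' \ S) := hj'
      _ ≤ kRemoved (u i) (k + 1) (A i) := henvy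
      _ ≤ kRemoved (v i) k (A i) := kRemoved_succ_le_of_agree (hv i) (hag i) k (A i)

lemma MonotoneProfile.monotone {n m : ℕ} {u : Fin n → Finset (Fin m) → ℝ}
    (hu : MonotoneProfile u) (i : Fin n) : Monotone (u i) :=
  fun S T h => (hu i).2 S T h

lemma ItemAdjFn.exists_agree {n m : ℕ} {u v : Fin n → Finset (Fin m) → ℝ} (h : ItemAdjFn u v) :
    ∃ j : Fin m, ∀ i S, j ∉ S → u i S = v i S := by
  obtain ⟨iStar, j, hothers, hiStar⟩ := h
  refine ⟨j, fun i S hS => ?_⟩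
  by_cases hi : i = iStar
  · exact hi ▸ hiStar S hS
  · rw [hothers i hi]

section scr

variable {n m : ℕ} (g : ℕ) (A : Fin n → Finset (Fin m))

def scrSet (u : Fin n → Finset (Fin m) → ℝ) : Set ℕ :=
  {t : ℕ | 1 ≤ t ∧ t ≤ g ∧ EF (2 * t) (fun i => kRemoved (u i) (g - t)) A}

open Classical in
lemma scr_eq (u : Fin n → Finset (Fin m) → ℝ) :
    scr g A u = if (scrSet g A u).Nonempty then -((sInf (scrSet g A u) : ℕ) : ℤ) else -(g : ℤ) :=
  rfl

lemma neg_le_scr (u : Fin n → Finset (Fin m) → ℝ) : -(g : ℤ) ≤ scr g A u := by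
  rw [scr_eq]
  split_ifs with h
  · have := (Nat.sInf_mem h).2.1
    omega
  · exact le_rfl

lemma neg_le_scr_of_mem {u : Fin n → Finset (Fin m) → ℝ} {t : ℕ} (ht : t ∈ scrSet g A u) :
    -(t : ℤ) ≤ scr g A u := by
  rw [scr_eq, if_pos ⟨t, ht⟩]
  have := Nat.sInf_le ht
  omega

lemma scr_sub_one_le {u v : Fin n → Finset (Fin m) → ℝ}
    (hstep : ∀ t ∈ scrSet g A u, t + 1 ≤ g → t + 1 ∈ scrSet g A v) :
    scr g A u - 1 ≤ scr g A v := by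
  have hv := neg_le_scr g A v
  rw [scr_eq]
  split_ifs with h
  · have hmin := Nat.sInf_mem h
    by_cases hlt : sInf (scrSet g A u) + 1 ≤ g
    · have := neg_le_scr_of_mem g A (hstep _ hmin hlt)
      push_cast at this
      omega
    · omega
  · omega

lemma scr_sub_one_le_of_agree {u v : Fin n → Finset (Fin m) → ℝ} (hu : MonotoneProfile u)
    (hv : MonotoneProfile v) {j : Fin m} (hag : ∀ i S, j ∉ S → u i S = v i S) :
    scr g A u - 1 ≤ scr g A v := by
  refine scr_sub_one_le g A fun t ⟨_, _, hEF⟩ htg => ⟨by omega, htg, ?_⟩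
  rw [show g - t = g - (t + 1) + 1 by omega] at hEF
  simpa only [mul_add] using EF.add_two_of_agree hu.monotone hv.monotone hag hEF

end scr

theorem scr_sensitivity_general (n m : ℕ) (g : ℕ)
    (A : Fin n → Finset (Fin m))
    (u utilde : Fin n → Finset (Fin m) → ℝ)
    (hu : MonotoneProfile u) (hut : MonotoneProfile utilde)
    (hadj : ItemAdjFn u utilde) :
    |scr g A u - scr g A utilde| ≤ 1 := by
  obtain ⟨j, hag⟩ := hadj.exists_agree
  have h₁ := scr_sub_one_le_of_agree g A hu hut hag
  have h₂ := scr_sub_one_le_of_agree g A hut hu fun i S hS => (hag i S hS).symm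
  rw [abs_le]
  constructor <;> linarith

theorem scr_sensitivity (n m : ℕ) (g : ℕ) (hg : 1 ≤ g)
    (A : Fin n → Finset (Fin m)) (hA : IsPartition A)
    (u utilde : Fin n → Finset (Fin m) → ℝ)
    (hu : MonotoneProfile u) (hut : MonotoneProfile utilde)
    (hadj : ItemAdjFn u utilde) :
    |scr g A u - scr g A utilde| ≤ 1 :=
  scr_sensitivity_general n m g A u utilde hu hut hadj
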